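/- In any run of the Swapping algorithm, the total weight of the final solution is at most its value under f: w(S) ≤ f(S), where w is extended linearly to sets (w(T) := Σ_{e ∈ T} w(e)). -/

import Mathlib

open Finset

attribute [local instance] Classical.propDecidable

universe u

/-- A matroid on a ground set `α`, given as a nonempty, downward closed family of
finite independent sets satisfying the augmentation property. -/
structure MatroidOn (α : Type u) where
  Indep : Finset α → Prop
  nonempty : ∃ A, Indep A
  subset_indep : ∀ ⦃A B : Finset α⦄, A ⊆ B → Indep B → Indep A
  augment : ∀ ⦃A B : Finset α⦄, Indep A → Indep B → A.card < B.card →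
    ∃ e ∈ B, e ∉ A ∧ Indep (insert e A)

/-- Submodularity of a set function. -/
def SubmodularFn {α : Type u} [DecidableEq α] (f : Finset α → ℝ) : Prop :=
  ∀ X Y : Finset α, X ⊆ Y → ∀ e, e ∉ Y →
    f (insert e Y) - f Y ≤ f (insert e X) - f X

/-- Monotonicity of a set function. -/
def MonotoneFn {α : Type u} (f : Finset α → ℝ) : Prop :=
  ∀ X Y : Finset α, X ⊆ Y → f X ≤ f Y

variable {α : Type u} [DecidableEq α]

/-- The marginal gain `f(e | T) = f (T ∪ {e}) - f T`. -/
def marg (f : Finset α → ℝ) (T : Finset α) (e : α) : ℝ := f (insert e T) - f T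

/-- State of the `Swapping` algorithm: the current solution `S`, the set `S'` of all
elements ever added to the solution, and the weights `w` assigned so far. -/
structure SwapState (α : Type u) where
  S : Finset α
  S' : Finset α
  w : α → ℝ

/-- Initial state of the `Swapping` algorithm. -/
def SwapState.start (α : Type u) : SwapState α := ⟨∅, ∅, fun _ => 0⟩

/-- One step of the `Swapping` algorithm, processing the arriving element `e`.
The arriving element always receives weight `w e = f(e | S')`. Ties in the choice of
the minimum-weight swap candidate may be broken arbitrarily. -/
inductive SwapStep (f : Finset α → ℝ) (M : MatroidOn α) :
    SwapState α → α → SwapState α → Prop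
  | add {st : SwapState α} {e : α} (hind : M.Indep (insert e st.S)) :
      SwapStep f M st e
        ⟨insert e st.S, insert e st.S', Function.update st.w e (marg f st.S' e)⟩
  | swap {st : SwapState α} {e y : α} (hdep : ¬ M.Indep (insert e st.S))
      (hy : y ∈ st.S) (hyind : M.Indep (insert e (st.S.erase y)))
      (hmin : ∀ z ∈ st.S, M.Indep (insert e (st.S.erase z)) → st.w y ≤ st.w z)
      (hgain : 2 * st.w y < marg f st.S' e) :
      SwapStep f M st e
        ⟨insert e (st.S.erase y), insert e st.S', Function.update st.w e (marg f st.S' e)⟩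
  | discardLow {st : SwapState α} {e y : α} (hdep : ¬ M.Indep (insert e st.S))
      (hy : y ∈ st.S) (hyind : M.Indep (insert e (st.S.erase y)))
      (hmin : ∀ z ∈ st.S, M.Indep (insert e (st.S.erase z)) → st.w y ≤ st.w z)
      (hgain : ¬ 2 * st.w y < marg f st.S' e) :
      SwapStep f M st e ⟨st.S, st.S', Function.update st.w e (marg f st.S' e)⟩
  | discardNone {st : SwapState α} {e : α} (hdep : ¬ M.Indep (insert e st.S))
      (h : ∀ y ∈ st.S, ¬ M.Indep (insert e (st.S.erase y))) :
      SwapStep f M st e ⟨st.S, st.S', Function.update st.w e (marg f st.S' e)⟩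

/-- Run of the `Swapping` algorithm from a given state, processing the stream in order. -/
inductive SwapRunFrom (f : Finset α → ℝ) (M : MatroidOn α) :
    SwapState α → List α → SwapState α → Prop
  | nil (st : SwapState α) : SwapRunFrom f M st [] st
  | cons {st st₁ st₂ : SwapState α} {e : α} {π : List α}
      (hstep : SwapStep f M st e st₁) (hrest : SwapRunFrom f M st₁ π st₂) :
      SwapRunFrom f M st (e :: π) st₂

/-- `SwapRun f M π st` holds iff some run of the `Swapping` algorithm on the stream `π`
terminates in state `st`. -/
def SwapRun (f : Finset α → ℝ) (M : MatroidOn α) (π : List α) (st : SwapState α) : Prop :=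
  SwapRunFrom f M (SwapState.start α) π st

lemma sum_update_le (f : Finset α → ℝ) (hsub : SubmodularFn f)
    (S' : Finset α) (w : α → ℝ) (e : α) (he : e ∉ S')
    (hw : ∀ A ⊆ S', A.sum w ≤ f A) :
    ∀ A ⊆ insert e S', A.sum (Function.update w e (marg f S' e)) ≤ f A := by
  intro A hA
  by_cases heA : e ∈ A
  · have h1 : A.erase e ⊆ S' := by
      intro x hx
      rcases Finset.mem_erase.1 hx with ⟨hne, hxA⟩
      rcases Finset.mem_insert.1 (hA hxA) with h | h
      · exact absurd h hne
      · exact h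
    have h2 : (A.erase e).sum (Function.update w e (marg f S' e)) = (A.erase e).sum w :=
      Finset.sum_congr rfl fun x hx =>
        Function.update_of_ne (Finset.mem_erase.1 hx).1 _ _
    have h3 : A.sum (Function.update w e (marg f S' e))
        = marg f S' e + (A.erase e).sum w := by
      rw [← Finset.add_sum_erase _ _ heA, Function.update_self, h2]
    have h4 := hsub (A.erase e) S' h1 e he
    have h5 := hw (A.erase e) h1
    have h6 : insert e (A.erase e) = A := Finset.insert_erase heA
    rw [h6] at h4
    rw [h3]
    unfold marg
    linarith
  · have h1 : A ⊆ S' := by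
      intro x hx
      rcases Finset.mem_insert.1 (hA hx) with h | h
      · subst h; exact absurd hx heA
      · exact h
    have h2 : A.sum (Function.update w e (marg f S' e)) = A.sum w := by
      refine Finset.sum_congr rfl fun x hx => ?_
      have hne : x ≠ e := fun h => heA (h ▸ hx)
      exact Function.update_of_ne hne _ _
    rw [h2]; exact hw A h1

lemma swap_inv (f : Finset α → ℝ) (M : MatroidOn α) (hsub : SubmodularFn f) :
    ∀ (π : List α) (st st' : SwapState α), SwapRunFrom f M st π st' →
      π.Nodup → (∀ e ∈ π, e ∉ st.S') →
      st.S ⊆ st.S' → (∀ A ⊆ st.S', A.sum st.w ≤ f A) →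
      st'.S ⊆ st'.S' ∧ (∀ A ⊆ st'.S', A.sum st'.w ≤ f A) := by
  intro π st st' hrun
  induction hrun with
  | nil st => exact fun _ _ h1 h2 => ⟨h1, h2⟩
  | @cons st st₁ st₂ e π hstep hrest ih =>
    intro hnodup hfresh hSS hw
    have heS' : e ∉ st.S' := hfresh e List.mem_cons_self
    have hfresh1 : ∀ x ∈ π, x ∉ insert e st.S' := by
      intro x hx hmem
      rcases Finset.mem_insert.1 hmem with h | h
      · exact (List.nodup_cons.1 hnodup).1 (h ▸ hx)
      · exact hfresh x (List.mem_cons_of_mem _ hx) h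
    have hnodup1 := (List.nodup_cons.1 hnodup).2
    cases hstep with
    | add hind =>
      refine ih hnodup1 hfresh1 ?_ ?_
      · exact Finset.insert_subset_insert _ hSS
      · exact sum_update_le f hsub st.S' st.w e heS' hw
    | swap hdep hy hyind hmin hgain =>
      refine ih hnodup1 hfresh1 ?_ ?_
      · exact Finset.insert_subset_insert _ ((Finset.erase_subset _ _).trans hSS)
      · exact sum_update_le f hsub st.S' st.w e heS' hw
    | discardLow hdep hy hyind hmin hgain =>
      refine ih hnodup1 ?_ hSS ?_
      · exact fun x hx h => hfresh x (List.mem_cons_of_mem _ hx) h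
      · intro A hA
        exact sum_update_le f hsub st.S' st.w e heS' hw A
          (hA.trans (Finset.subset_insert _ _))
    | discardNone hdep h =>
      refine ih hnodup1 ?_ hSS ?_
      · exact fun x hx hh => hfresh x (List.mem_cons_of_mem _ hx) hh
      · intro A hA
        exact sum_update_le f hsub st.S' st.w e heS' hw A
          (hA.trans (Finset.subset_insert _ _))

theorem swapping_weight_of_solution_le_value
    (f : Finset α → ℝ) (M : MatroidOn α)
    (hmono : MonotoneFn f) (hnorm : f ∅ = 0) (hsub : SubmodularFn f)
    (π : List α) (hdist : π.Nodup)
    (st : SwapState α) (hrun : SwapRun f M π st) :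
    st.S.sum st.w ≤ f st.S := by
  have h := swap_inv f M hsub π (SwapState.start α) st hrun hdist
    (by intro e _ h; exact absurd h (Finset.notMem_empty e))
    (by intro x hx; exact hx)
    (by
      intro A hA
      have : A = ∅ := Finset.subset_empty.1 hA
      subst this
      simp [hnorm])
  exact h.2 st.S (fun x hx => h.1 hx)
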